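/- Let M be a finitely generated torsion-free S-module with a Z-module structure (Z the structure algebra of a finite moment graph H), and L ⊆ X a saturated sublattice. Then M^L = M ⊗_S S^L carries a canonical action of Z(H^L), and decomposes canonically as M^L = ⊕_{Ω ∈ C(H^L)} M^{L,Ω} over the connected components Ω of H^L, with M^{L,Ω} ⊆ ⊕_{x∈Ω} M^{0,x}. -/

import Mathlib

/-- A moment graph over the lattice `X`. -/
structure MomentGraph (X : Type) where
  V : Type
  E : Type
  src : E → V
  tgt : E → V
  label : E → X
  no_loop : ∀ e, src e ≠ tgt e

variable {n : ℕ} {k : Type} [Field k]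

/-- The embedding of the lattice `X = ℤⁿ` into `S = Sym(X ⊗ k)`. -/
noncomputable def latEmb (k : Type) [Field k] (n : ℕ) (v : Fin n → ℤ) :
    MvPolynomial (Fin n) k :=
  ∑ i, MvPolynomial.C (v i : k) * MvPolynomial.X i

/-- The structure algebra `Z(H)` as an `S`-subalgebra of `∏_{x ∈ V} S`. -/
noncomputable def structAlgebra (G : MomentGraph (Fin n → ℤ)) (k : Type) [Field k] :
    Subalgebra (MvPolynomial (Fin n) k) (G.V → MvPolynomial (Fin n) k) where
  carrier := {z | ∀ e, z (G.src e) - z (G.tgt e) ∈ Ideal.span {latEmb k n (G.label e)}}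
  add_mem' := by
    intro a b ha hb e
    have := Ideal.add_mem _ (ha e) (hb e)
    simpa [add_sub_add_comm] using this
  mul_mem' := by
    intro a b ha hb e
    have h1 := Ideal.mul_mem_left _ (a (G.src e)) (hb e)
    have h2 := Ideal.mul_mem_right (b (G.tgt e)) _ (ha e)
    have := Ideal.add_mem _ h1 h2
    have heq : a (G.src e) * (b (G.src e) - b (G.tgt e)) +
        (a (G.src e) - a (G.tgt e)) * b (G.tgt e) =
        a (G.src e) * b (G.src e) - a (G.tgt e) * b (G.tgt e) := by ring
    simpa [heq] using this
  algebraMap_mem' := by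
    intro r e
    simp

/-- The subgraph `H^L`: all vertices, only edges labeled in `L`. -/
def MomentGraph.restrict (G : MomentGraph (Fin n → ℤ)) (L : Submodule ℤ (Fin n → ℤ)) :
    MomentGraph (Fin n → ℤ) where
  V := G.V
  E := {e : G.E // G.label e ∈ L}
  src e := G.src e.1
  tgt e := G.tgt e.1
  label e := G.label e.1
  no_loop e := G.no_loop e.1

lemma structAlgebra_le_restrict (G : MomentGraph (Fin n → ℤ))
    (L : Submodule ℤ (Fin n → ℤ)) (k : Type) [Field k] :
    structAlgebra G k ≤ structAlgebra (G.restrict L) k :=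
  fun _ hz e => hz e.1

/-- The multiplicative set for `S^L = S[α⁻¹ : α ∈ X, α ≠ 0, α ∉ L]`. -/
noncomputable def locSet (k : Type) [Field k] (n : ℕ) (L : Submodule ℤ (Fin n → ℤ)) :
    Submonoid (MvPolynomial (Fin n) k) :=
  Submonoid.closure {s | ∃ α : Fin n → ℤ, α ≠ 0 ∧ α ∉ L ∧ s = latEmb k n α}

/-- The multiplicative set for `S⁰ = S[α⁻¹ : α ∈ X, α ≠ 0]`. -/
noncomputable def genericSet (k : Type) [Field k] (n : ℕ) :
    Submonoid (MvPolynomial (Fin n) k) :=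
  Submonoid.closure {s | ∃ α : Fin n → ℤ, α ≠ 0 ∧ s = latEmb k n α}

/-- The set of connected components of a moment graph: the quotient of the
vertex set by the equivalence relation generated by adjacency. -/
def MomentGraph.Components (G : MomentGraph (Fin n → ℤ)) : Type :=
  Quotient (Relation.EqvGen.setoid
    (fun x y : G.V => ∃ e : G.E, G.src e = x ∧ G.tgt e = y))

section

variable (k)
variable (G : MomentGraph (Fin n → ℤ))
variable (M : Type) [AddCommGroup M]
  [Module (MvPolynomial (Fin n) k) M]
  [Module (structAlgebra G k) M]
  [IsScalarTower (MvPolynomial (Fin n) k) (structAlgebra G k) M]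

/-- The action of an element of the structure algebra as an `S`-linear map. -/
noncomputable def zsmulLin (z : structAlgebra G k) : M →ₗ[MvPolynomial (Fin n) k] M where
  toFun m := z • m
  map_add' := smul_add z
  map_smul' s m := (smul_comm s z m).symm

variable (L : Submodule ℤ (Fin n → ℤ))

/-- The generic stalk `M^{0,x}` inside `M⁰`. -/
noncomputable def genStalk (x : G.V) :
    Submodule (MvPolynomial (Fin n) k) (LocalizedModule (genericSet k n) (LocalizedModule (locSet k n L) M)) where
  carrier := {m | ∀ z : structAlgebra G k,
    LocalizedModule.map (genericSet k n)
      (LocalizedModule.map (locSet k n L) (zsmulLin k G M z)) m = (z.1 x) • m}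
  add_mem' := by
    intro a b ha hb z
    simp [ha z, hb z, smul_add]
  zero_mem' := by
    intro z
    simp
  smul_mem' := by
    intro c a ha z
    simp [ha z, smul_comm c (z.1 x)]

/-!
Let `s` be the product of the labels of the edges of `H` outside `L`. It acts invertibly on `M^L`
and `s • Z(H^L) ⊆ Z(H)`, so `z ↦ s⁻¹ (s z)` extends the localized action of `Z(H)` to `Z(H^L)`.
The indicator functions of the connected components of `H^L` lie in `Z(H^L)` and form a complete
family of orthogonal idempotents, whose images split `M^L`. For the stalks, let `T` be the product
of all labels: `T δ_x ∈ Z(H)` for every vertex `x`, `Z(H)` acts on `(T δ_x) m` through the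
character `z ↦ z x`, and `m = T⁻¹ ∑ₓ (T δ_x) m` over `S⁰`; on the `Ω`-summand the terms with
`x ∉ Ω` vanish, since `(T δ_x) e_Ω = 0`.
-/

theorem IsUnit.inv_mul_smul {R E : Type*} [CommSemiring R] [Semiring E] [Algebra R E] {s : R}
    (hu : IsUnit (algebraMap R E s)) (a : E) : ↑hu.unit⁻¹ * (s • a) = a := by
  rw [Algebra.smul_def, ← mul_assoc, hu.val_inv_mul, one_mul]

section ExtendOfSMulMem

variable {R P E : Type*} [CommSemiring R] [Semiring P] [Algebra R P] [Semiring E] [Algebra R E]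
  {A B : Subalgebra R P} (ψ : A →ₐ[R] E) {s : R} (hs : ∀ b ∈ B, s • b ∈ A)
  (hu : IsUnit (algebraMap R E s))

/-- `b ↦ s⁻¹ ψ (s • b)` -/
noncomputable def AlgHom.extendOfSMulMem : B →ₐ[R] E :=
  AlgHom.ofLinearMap
    (LinearMap.mulLeft R (↑hu.unit⁻¹ : E) ∘ₗ ψ.toLinearMap ∘ₗ
      LinearMap.codRestrict (Subalgebra.toSubmodule A) (s • B.val.toLinearMap) (fun b => hs b b.2))
    (by
      change ↑hu.unit⁻¹ * ψ (s • 1) = 1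
      rw [map_smul, map_one, hu.inv_mul_smul])
    (by
      intro x y
      change ↑hu.unit⁻¹ * ψ ⟨s • (x * y : P), _⟩ =
        ↑hu.unit⁻¹ * ψ ⟨s • (x : P), _⟩ * (↑hu.unit⁻¹ * ψ ⟨s • (y : P), _⟩)
      have hA : (⟨s • (x : P), hs x x.2⟩ : A) * ⟨s • (y : P), hs y y.2⟩ =
          s • ⟨s • (x * y : P), hs _ (x * y).2⟩ :=
        Subtype.ext <| (smul_mul_smul_comm s (x : P) s (y : P)).trans (mul_smul s s _)
      have hcomm : Commute (↑hu.unit⁻¹ : E) (ψ ⟨s • (x : P), hs x x.2⟩) :=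
        Commute.units_inv_left (Algebra.commutes s _)
      rw [mul_assoc, ← mul_assoc (ψ _), ← hcomm.eq, mul_assoc, ← map_mul, hA, map_smul,
        hu.inv_mul_smul])

theorem AlgHom.extendOfSMulMem_inclusion (hAB : A ≤ B) (a : A) :
    ψ.extendOfSMulMem hs hu (Subalgebra.inclusion hAB a) = ψ a := by
  change ↑hu.unit⁻¹ * ψ (s • a) = ψ a
  rw [map_smul, hu.inv_mul_smul]

end ExtendOfSMulMem

noncomputable def LocalizedModule.mapAlgHom {R N : Type*} [CommSemiring R] [AddCommMonoid N]
    [Module R N] (W : Submonoid R) : Module.End R N →ₐ[R] Module.End R (LocalizedModule W N) :=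
  AlgHom.ofLinearMap (LinearMap.restrictScalarsₗ R (Localization W) _ _ R ∘ₗ LocalizedModule.map W)
    (LinearMap.ext fun m => by
      induction m using LocalizedModule.induction_on
      simp)
    (fun f g => LinearMap.ext fun m => by
      induction m using LocalizedModule.induction_on
      simp)

theorem LocalizedModule.mk_sum {R N ι : Type*} [CommSemiring R] [AddCommMonoid N] [Module R N]
    {W : Submonoid R} (s : Finset ι) (f : ι → N) (t : W) :
    mk (∑ i ∈ s, f i) t = ∑ i ∈ s, mk (f i) t := by
  have h (y : N) : mk y t = Localization.mk 1 t • mkLinearMap W N y := by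
    rw [mkLinearMap_apply, mk_smul_mk, one_smul, mul_one]
  simp only [h, map_sum, Finset.smul_sum]

section Idempotents

variable {R N ι : Type*} [Ring R] [AddCommGroup N] [Module R N] {e : ι → Module.End R N}

theorem OrthogonalIdempotents.iSupIndep_range (he : OrthogonalIdempotents e) :
    iSupIndep fun i => LinearMap.range (e i) := by
  intro i
  refine (LinearMap.IsIdempotentElem.isCompl (he.idem i)).disjoint.mono_right ?_
  refine iSup₂_le fun j hj => ?_
  rintro _ ⟨y, rfl⟩
  rw [LinearMap.mem_ker, ← Module.End.mul_apply, he.ortho (Ne.symm hj), LinearMap.zero_apply]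

theorem CompleteOrthogonalIdempotents.iSup_range_eq_top [Fintype ι]
    (he : CompleteOrthogonalIdempotents e) : ⨆ i, LinearMap.range (e i) = ⊤ := by
  refine eq_top_iff.2 fun m _ => ?_
  rw [← Module.End.one_apply (R := R) m, ← he.complete, LinearMap.sum_apply]
  exact Submodule.sum_mem _ fun i _ => Submodule.mem_iSup_of_mem i (LinearMap.mem_range_self _ _)

theorem IsIdempotentElem.map_range_le_of_commute {f g : Module.End R N}
    (hf : IsIdempotentElem f) (h : Commute f g) : (LinearMap.range f).map g ≤ LinearMap.range f :=
  (Module.End.mem_invtSubmodule_iff_map_le g).1 ((LinearMap.IsIdempotentElem.commute_iff hf).1 h).1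

end Idempotents

theorem completeOrthogonalIdempotents_ite_eq {V ι R : Type*} [Semiring R] [Fintype ι]
    [DecidableEq ι] (f : V → ι) :
    CompleteOrthogonalIdempotents fun i : ι => fun x : V => if f x = i then (1 : R) else 0 where
  idem i := funext fun x => by by_cases h : f x = i <;> simp [h]
  ortho i j hij := funext fun x => by by_cases h : f x = i <;> simp [h, hij]
  complete := funext fun x => by simp

namespace MomentGraph

def component (x : G.V) : G.Components := Quotient.mk _ x

theorem component_src (e : G.E) : G.component (G.src e) = G.component (G.tgt e) :=
  Quotient.sound (Relation.EqvGen.rel _ _ ⟨e, rfl, rfl⟩)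

section LabelProducts

variable [Fintype G.E]

noncomputable def labelProd : MvPolynomial (Fin n) k :=
  ∏ e, latEmb k n (G.label e)

open Classical in
noncomputable def outerLabelProd : MvPolynomial (Fin n) k :=
  ∏ e ∈ Finset.univ.filter (fun e => G.label e ∉ L), latEmb k n (G.label e)

theorem labelProd_mem_genericSet (hnz : ∀ e, G.label e ≠ 0) : G.labelProd k ∈ genericSet k n :=
  Submonoid.prod_mem _ fun e _ => Submonoid.subset_closure ⟨G.label e, hnz e, rfl⟩

open Classical in
theorem outerLabelProd_mem_locSet : G.outerLabelProd k L ∈ locSet k n L := by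
  refine Submonoid.prod_mem _ fun e he => Submonoid.subset_closure ?_
  have hL : G.label e ∉ L := (Finset.mem_filter.1 he).2
  exact ⟨G.label e, fun h0 => hL (h0 ▸ L.zero_mem), hL, rfl⟩

theorem labelProd_smul_mem (f : G.V → MvPolynomial (Fin n) k) :
    G.labelProd k • f ∈ structAlgebra G k := fun e => by
  simp only [Pi.smul_apply, smul_eq_mul, ← mul_sub]
  exact Ideal.mul_mem_right _ _ (Ideal.mem_span_singleton.2
    (Finset.dvd_prod_of_mem _ (Finset.mem_univ e)))

theorem outerLabelProd_smul_mem {z : G.V → MvPolynomial (Fin n) k}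
    (hz : z ∈ structAlgebra (G.restrict L) k) : G.outerLabelProd k L • z ∈ structAlgebra G k :=
  fun e => by
  classical
  simp only [Pi.smul_apply, smul_eq_mul, ← mul_sub]
  by_cases h : G.label e ∈ L
  · exact Ideal.mul_mem_left _ _ (hz ⟨e, h⟩)
  · exact Ideal.mul_mem_right _ _ (Ideal.mem_span_singleton.2
      (Finset.dvd_prod_of_mem _ (Finset.mem_filter.2 ⟨Finset.mem_univ e, h⟩)))

end LabelProducts

end MomentGraph

namespace structAlgebra

open Classical in
noncomputable def componentIdempotent (Ω : G.Components) : structAlgebra G k :=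
  ⟨fun x => if G.component x = Ω then 1 else 0, fun e => by simp [G.component_src e]⟩

open Classical in
theorem completeOrthogonalIdempotents_componentIdempotent [Fintype G.Components] :
    CompleteOrthogonalIdempotents (componentIdempotent k G) :=
  (CompleteOrthogonalIdempotents.map_injective_iff (structAlgebra G k).val.toRingHom
    Subtype.val_injective).1 (completeOrthogonalIdempotents_ite_eq G.component)

noncomputable def restrictInclusion :
    structAlgebra G k →ₐ[MvPolynomial (Fin n) k] structAlgebra (G.restrict L) k :=
  Subalgebra.inclusion (structAlgebra_le_restrict G L k)

variable [Fintype G.E]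

open Classical in
noncomputable def vertexElement (x : G.V) : structAlgebra G k :=
  ⟨G.labelProd k • Pi.single x 1, G.labelProd_smul_mem k _⟩

theorem sum_vertexElement [Fintype G.V] :
    ∑ x, vertexElement k G x = algebraMap _ _ (G.labelProd k) := by
  classical
  refine Subtype.ext ?_
  simp only [vertexElement, AddSubmonoidClass.coe_finsetSum, ← Finset.smul_sum,
    Finset.univ_sum_single (fun _ => (1 : MvPolynomial (Fin n) k)),
    Algebra.algebraMap_eq_smul_one]
  rfl

theorem mul_vertexElement (z : structAlgebra G k) (x : G.V) :
    z * vertexElement k G x = z.1 x • vertexElement k G x := by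
  classical
  refine Subtype.ext (funext fun y => ?_)
  by_cases h : y = x
  · subst h; simp [vertexElement]
  · simp [vertexElement, h]

theorem restrictInclusion_vertexElement_mul_componentIdempotent {x : G.V}
    {Ω : (G.restrict L).Components} (hx : (G.restrict L).component x ≠ Ω) :
    restrictInclusion k G L (vertexElement k G x) * componentIdempotent k (G.restrict L) Ω = 0 := by
  classical
  refine Subtype.ext (funext fun (y : G.V) => ?_)
  change (G.labelProd k • Pi.single x 1 : G.V → MvPolynomial (Fin n) k) y *
    (componentIdempotent k (G.restrict L) Ω : (G.restrict L).V → MvPolynomial (Fin n) k) y = 0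
  by_cases h : y = x
  · subst h; simp [componentIdempotent, hx]
  · rw [Pi.smul_apply, Pi.single_eq_of_ne h, smul_zero, zero_mul]

end structAlgebra

noncomputable def localizedAction :
    structAlgebra G k →ₐ[MvPolynomial (Fin n) k]
      Module.End (MvPolynomial (Fin n) k) (LocalizedModule (locSet k n L) M) :=
  (LocalizedModule.mapAlgHom (locSet k n L)).comp (Algebra.lsmul _ _ M)

noncomputable def canonicalAction [Fintype G.E] :
    structAlgebra (G.restrict L) k →ₐ[MvPolynomial (Fin n) k]
      Module.End (MvPolynomial (Fin n) k) (LocalizedModule (locSet k n L) M) :=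
  (localizedAction k G M L).extendOfSMulMem (fun _ => G.outerLabelProd_smul_mem k L)
    (IsLocalizedModule.map_units (LocalizedModule.mkLinearMap _ M)
      ⟨_, G.outerLabelProd_mem_locSet k L⟩)

theorem canonicalAction_restrictInclusion [Fintype G.E] (z : structAlgebra G k) :
    canonicalAction k G M L (structAlgebra.restrictInclusion k G L z) =
      localizedAction k G M L z :=
  AlgHom.extendOfSMulMem_inclusion _ _ _ _ _

theorem mk_mem_genStalk {x : G.V} {y : LocalizedModule (locSet k n L) M}
    (hy : ∀ z : structAlgebra G k, localizedAction k G M L z y = z.1 x • y) (t : genericSet k n) :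
    LocalizedModule.mk y t ∈ genStalk k G M L x := fun z => by
  change LocalizedModule.map _ (localizedAction k G M L z) (.mk y t) = _
  rw [LocalizedModule.map_mk, hy z, LocalizedModule.smul'_mk]

theorem localizedAction_localizedAction_vertexElement [Fintype G.E] (z : structAlgebra G k) (x : G.V)
    (m : LocalizedModule (locSet k n L) M) :
    localizedAction k G M L z (localizedAction k G M L (structAlgebra.vertexElement k G x) m) =
      z.1 x • localizedAction k G M L (structAlgebra.vertexElement k G x) m := by
  rw [← Module.End.mul_apply, ← map_mul, structAlgebra.mul_vertexElement, map_smul,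
    LinearMap.smul_apply]

theorem mkLinearMap_eq_sum_mk_vertexElement [Fintype G.E] [Fintype G.V]
    (hT : G.labelProd k ∈ genericSet k n) (m : LocalizedModule (locSet k n L) M) :
    LocalizedModule.mkLinearMap (genericSet k n) (LocalizedModule (locSet k n L) M) m =
      ∑ x, LocalizedModule.mk (localizedAction k G M L (structAlgebra.vertexElement k G x) m)
        ⟨_, hT⟩ := by
  rw [← LocalizedModule.mk_sum, ← LinearMap.sum_apply, ← map_sum, structAlgebra.sum_vertexElement,
    AlgHom.commutes, Module.algebraMap_end_apply, LocalizedModule.mkLinearMap_apply]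
  exact (LocalizedModule.mk_cancel (⟨_, hT⟩ : genericSet k n) m).symm

theorem mkLinearMap_mem_iSup_genStalk [Fintype G.E] [Fintype G.V] (hnz : ∀ e, G.label e ≠ 0)
    (ρ : structAlgebra (G.restrict L) k →ₐ[MvPolynomial (Fin n) k]
      Module.End (MvPolynomial (Fin n) k) (LocalizedModule (locSet k n L) M))
    (hρ : ∀ z, ρ (structAlgebra.restrictInclusion k G L z) =
      localizedAction k G M L z)
    {Ω : (G.restrict L).Components} {m : LocalizedModule (locSet k n L) M}
    (hm : ρ (structAlgebra.componentIdempotent k (G.restrict L) Ω) m = m) :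
    LocalizedModule.mkLinearMap (genericSet k n) (LocalizedModule (locSet k n L) M) m ∈
      ⨆ x ∈ {x : G.V | Quotient.mk _ x = Ω}, genStalk k G M L x := by
  rw [mkLinearMap_eq_sum_mk_vertexElement k G M L (G.labelProd_mem_genericSet k hnz)]
  refine Submodule.sum_mem _ fun x _ => ?_
  by_cases hx : (G.restrict L).component x = Ω
  · exact Submodule.mem_iSup_of_mem x (Submodule.mem_iSup_of_mem hx
      (mk_mem_genStalk k G M L (localizedAction_localizedAction_vertexElement k G M L · x m) _))
  · have hzero : localizedAction k G M L (structAlgebra.vertexElement k G x) m = 0 := by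
      rw [← hm, ← hρ, ← Module.End.mul_apply, ← map_mul,
        structAlgebra.restrictInclusion_vertexElement_mul_componentIdempotent k G L hx, map_zero,
        LinearMap.zero_apply]
    rw [hzero, LocalizedModule.zero_mk]
    exact zero_mem _

theorem canonical_decomposition
    [Finite G.V] [Finite G.E] (hnz : ∀ e, G.label e ≠ 0) :
    ∃ (ρ : structAlgebra (G.restrict L) k →ₐ[MvPolynomial (Fin n) k]
          Module.End (MvPolynomial (Fin n) k) (LocalizedModule (locSet k n L) M))
      (N : (G.restrict L).Components → Submodule (MvPolynomial (Fin n) k) (LocalizedModule (locSet k n L) M)),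
      (∀ z : structAlgebra G k,
        ρ (Subalgebra.inclusion (structAlgebra_le_restrict G L k) z) =
          LocalizedModule.map (locSet k n L) (zsmulLin k G M z)) ∧
      iSupIndep N ∧
      (⨆ Ω, N Ω) = ⊤ ∧
      (∀ (Ω : (G.restrict L).Components) (z : structAlgebra (G.restrict L) k),
        Submodule.map (ρ z) (N Ω) ≤ N Ω) ∧
      (∀ Ω : (G.restrict L).Components,
        Submodule.map (LocalizedModule.mkLinearMap (genericSet k n) (LocalizedModule (locSet k n L) M)) (N Ω) ≤
          ⨆ x ∈ {x : G.V | Quotient.mk _ x = Ω}, genStalk k G M L x) := by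
  have := Fintype.ofFinite G.E
  have := Fintype.ofFinite G.V
  have : Finite (G.restrict L).V := ‹Finite G.V›
  have : Fintype (G.restrict L).Components := @Fintype.ofFinite _ (Quotient.finite _)
  set ρ := canonicalAction k G M L
  have he := (structAlgebra.completeOrthogonalIdempotents_componentIdempotent k (G.restrict L)).map
    ρ.toRingHom
  refine ⟨ρ, fun Ω => LinearMap.range (ρ (structAlgebra.componentIdempotent k _ Ω)),
    canonicalAction_restrictInclusion k G M L, he.iSupIndep_range, he.iSup_range_eq_top,
    fun Ω z => (he.idem Ω).map_range_le_of_commute ((Commute.all _ z).map ρ), ?_⟩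
  rintro Ω _ ⟨m, ⟨y, rfl⟩, rfl⟩
  exact mkLinearMap_mem_iSup_genStalk k G M L hnz ρ (canonicalAction_restrictInclusion k G M L)
    (LinearMap.congr_fun (he.idem Ω).eq y)

end
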